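/- arXiv:0906.4177 — 2 statements merged into one kernel-verified Lean document; each statement's English description precedes it below -/
import Mathlib

section
/- Let z = x + iy be a complex number with x ≥ 1/4 and |z| ≥ 4, and define I(z) = -Re ∫₀^∞ ( 2η/(η² + z²) ) · dη/(e^{2πη} - 1). Then I(z) ≤ 15/(128|z|²) + (4/3)·e^{-2π|z|/3}·( 1 + 1/|z|² ). -/
/-!
Bound `-Re ∫` by `∫ ‖·‖` and split `(0, ∞)` at `η = |z|/3`. Below the split point
`|η² + z²| ≥ |z|² - η² ≥ 8|z|²/9`, while `e^{2πη} - 1 = 2 e^{πη} sinh(πη) ≥ 2πη e^{πη}`; this part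
contributes at most `9/(8π²|z|²) ≤ 15/(128|z|²)`. Above it, `|η² + z²| ≥ xη ≥ η/4` and
`2πη ≥ 8π/3`, so `1/(e^{2πη} - 1) ≤ e^{-2πη}/(1 - e^{-8π/3})`; this part contributes at most
`4 e^{-2π|z|/3}/(π(1 - e^{-8π/3})) ≤ (4/3) e^{-2π|z|/3}`.
-/

open Real MeasureTheory Set

lemma one_div_exp_sub_one_le_exp_neg_half_div {t : ℝ} (ht : 0 < t) :
    1 / (exp t - 1) ≤ exp (-(t / 2)) / t := by
  have hfactor : exp t - 1 = exp (t / 2) * (2 * sinh (t / 2)) := by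
    rw [sinh_eq, mul_div_cancel₀ _ two_ne_zero, mul_sub, ← exp_add, ← exp_add]
    ring_nf; rw [exp_zero]; ring
  have hsinh : t / 2 ≤ sinh (t / 2) := self_le_sinh_iff.mpr (by positivity)
  have hkey : exp (t / 2) * t ≤ exp t - 1 := by
    rw [hfactor]; gcongr; linarith
  calc 1 / (exp t - 1) ≤ 1 / (exp (t / 2) * t) :=
        one_div_le_one_div_of_le (by positivity) hkey
    _ = exp (-(t / 2)) / t := by rw [exp_neg]; field_simp

lemma one_div_exp_sub_one_le_of_le {c t : ℝ} (hc : 0 < c) (hct : c ≤ t) :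
    1 / (exp t - 1) ≤ exp (-t) / (1 - exp (-c)) := by
  have hc1 : exp (-c) < 1 := exp_lt_one_iff.mpr (by linarith)
  have ht : 0 < exp t - 1 := sub_pos.mpr (one_lt_exp_iff.mpr (by linarith))
  have hexp : exp (-t) * (exp t - 1) = 1 - exp (-t) := by
    rw [mul_sub, ← exp_add]; simp
  rw [div_le_div_iff₀ ht (by linarith), one_mul, hexp]
  gcongr

lemma integral_exp_neg_mul_Ioi {b : ℝ} (hb : 0 < b) (c : ℝ) :
    ∫ x in Ioi c, exp (-b * x) = exp (-b * c) / b := by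
  rw [integral_exp_mul_Ioi (by linarith) c, div_neg, neg_div, neg_neg]

lemma setIntegral_norm_Ioi_le_add {E : Type*} [NormedAddCommGroup E] {f : ℝ → E} {g h : ℝ → ℝ}
    {a b : ℝ} (hab : a ≤ b) (hf : AEStronglyMeasurable f (volume.restrict (Ioi a)))
    (hg : IntegrableOn g (Ioi a)) (hg0 : ∀ x ∈ Ioi a, 0 ≤ g x) (hh : IntegrableOn h (Ioi b))
    (hfg : ∀ x ∈ Ioc a b, ‖f x‖ ≤ g x) (hfh : ∀ x ∈ Ioi b, ‖f x‖ ≤ h x) :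
    ∫ x in Ioi a, ‖f x‖ ≤ (∫ x in Ioi a, g x) + ∫ x in Ioi b, h x := by
  have hg' : IntegrableOn g (Ioc a b) := hg.mono_set Ioc_subset_Ioi_self
  have hf₁ : IntegrableOn (fun x ↦ ‖f x‖) (Ioc a b) :=
    (hg'.mono' (hf.mono_set Ioc_subset_Ioi_self)
      ((ae_restrict_iff' measurableSet_Ioc).mpr (.of_forall hfg))).norm
  have hf₂ : IntegrableOn (fun x ↦ ‖f x‖) (Ioi b) :=
    (hh.mono' (hf.mono_set (Ioi_subset_Ioi hab))
      ((ae_restrict_iff' measurableSet_Ioi).mpr (.of_forall hfh))).norm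
  have hsplit : ∫ x in Ioi a, ‖f x‖ = (∫ x in Ioc a b, ‖f x‖) + ∫ x in Ioi b, ‖f x‖ := by
    rw [← Ioc_union_Ioi_eq_Ioi hab,
      setIntegral_union (Ioc_disjoint_Ioi le_rfl) measurableSet_Ioi hf₁ hf₂]
  rw [hsplit]
  gcongr ?_ + ?_
  · calc ∫ x in Ioc a b, ‖f x‖ ≤ ∫ x in Ioc a b, g x :=
          setIntegral_mono_on hf₁ hg' measurableSet_Ioc hfg
      _ ≤ ∫ x in Ioi a, g x := setIntegral_mono_set hg
          (ae_restrict_of_forall_mem measurableSet_Ioi hg0) Ioc_subset_Ioi_self.eventuallyLE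
  · exact setIntegral_mono_on hf₂ hh measurableSet_Ioi hfh

lemma re_mul_le_norm_ofReal_sq_add_sq (η : ℝ) (z : ℂ) :
    z.re * η ≤ ‖(η : ℂ) ^ 2 + z ^ 2‖ := by
  have hsq : ‖(η : ℂ) ^ 2 + z ^ 2‖ ^ 2 = (z.re * η) ^ 2 +
      ((η ^ 2 - z.im ^ 2) ^ 2 + (z.re * η) ^ 2 + 2 * (z.re * z.im) ^ 2 + (z.re ^ 2) ^ 2) := by
    rw [Complex.sq_norm, Complex.normSq_apply]
    simp only [Complex.add_re, Complex.add_im, sq, Complex.mul_re, Complex.mul_im,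
      Complex.ofReal_re, Complex.ofReal_im]
    ring
  refine le_of_abs_le (abs_le_of_sq_le_sq ?_ (norm_nonneg _))
  rw [hsq]
  exact le_add_of_nonneg_right (by positivity)

lemma norm_sq_sub_sq_le_norm_ofReal_sq_add_sq (η : ℝ) (z : ℂ) :
    ‖z‖ ^ 2 - η ^ 2 ≤ ‖(η : ℂ) ^ 2 + z ^ 2‖ := by
  have h := norm_sub_norm_le (z ^ 2) (-(η : ℂ) ^ 2)
  rwa [norm_pow, norm_neg, norm_pow, Complex.norm_real, Real.norm_eq_abs, sq_abs, sub_neg_eq_add,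
    add_comm] at h

noncomputable def binetIntegrand (z : ℂ) (η : ℝ) : ℂ :=
  2 * (η : ℂ) / ((η : ℂ) ^ 2 + z ^ 2) * (1 / ((exp (2 * π * η) : ℂ) - 1))

section binetIntegrand

variable {z : ℂ} {η : ℝ}

lemma measurable_binetIntegrand (z : ℂ) : Measurable (binetIntegrand z) := by
  unfold binetIntegrand; fun_prop

lemma norm_binetIntegrand (hη : 0 < η) :
    ‖binetIntegrand z η‖ =
      2 * η / ‖(η : ℂ) ^ 2 + z ^ 2‖ * (1 / (exp (2 * π * η) - 1)) := by
  have hexp : 0 < exp (2 * π * η) - 1 :=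
    sub_pos.mpr (one_lt_exp_iff.mpr (by positivity))
  have hcast : (exp (2 * π * η) : ℂ) - 1 = ((exp (2 * π * η) - 1 : ℝ) : ℂ) := by
    push_cast; rfl
  rw [binetIntegrand, hcast, norm_mul, norm_div, norm_div, norm_mul, norm_one, Complex.norm_real,
    Complex.norm_real, Complex.norm_two, Real.norm_of_nonneg hη.le, Real.norm_of_nonneg hexp.le]

lemma norm_binetIntegrand_le_of_three_mul_le (hη : 0 < η) (hηz : 3 * η ≤ ‖z‖) :
    ‖binetIntegrand z η‖ ≤ 9 / (8 * π ^ 2) / ‖z‖ ^ 2 * (π * exp (-π * η)) := by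
  have hz : 0 < ‖z‖ := by linarith
  have hA : 8 / 9 * ‖z‖ ^ 2 ≤ ‖(η : ℂ) ^ 2 + z ^ 2‖ := by
    nlinarith [norm_sq_sub_sq_le_norm_ofReal_sq_add_sq η z]
  have hexp : 0 < exp (2 * π * η) - 1 :=
    sub_pos.mpr (one_lt_exp_iff.mpr (by positivity))
  have hkernel := one_div_exp_sub_one_le_exp_neg_half_div (by positivity : 0 < 2 * π * η)
  rw [norm_binetIntegrand hη]
  calc 2 * η / ‖(η : ℂ) ^ 2 + z ^ 2‖ * (1 / (exp (2 * π * η) - 1))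
      ≤ 2 * η / (8 / 9 * ‖z‖ ^ 2) * (exp (-(2 * π * η / 2)) / (2 * π * η)) := by gcongr
    _ = 9 / (8 * π ^ 2) / ‖z‖ ^ 2 * (π * exp (-π * η)) := by
      field_simp

lemma norm_binetIntegrand_le_of_le_two_pi_mul {c : ℝ} (hc : 0 < c) (hre : 0 < z.re)
    (hη : c ≤ 2 * π * η) :
    ‖binetIntegrand z η‖ ≤ 2 / z.re / (1 - exp (-c)) * exp (-(2 * π) * η) := by
  have hη0 : 0 < η := by nlinarith [pi_pos]
  have hexp : 0 < exp (2 * π * η) - 1 :=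
    sub_pos.mpr (one_lt_exp_iff.mpr (by positivity))
  have hA : z.re * η ≤ ‖(η : ℂ) ^ 2 + z ^ 2‖ := re_mul_le_norm_ofReal_sq_add_sq η z
  rw [norm_binetIntegrand hη0]
  calc 2 * η / ‖(η : ℂ) ^ 2 + z ^ 2‖ * (1 / (exp (2 * π * η) - 1))
      ≤ 2 * η / (z.re * η) * (exp (-(2 * π * η)) / (1 - exp (-c))) := by
        gcongr 2 * η / ?_ * ?_
        exact one_div_exp_sub_one_le_of_le hc hη
    _ = 2 / z.re / (1 - exp (-c)) * exp (-(2 * π) * η) := by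
      field_simp

lemma norm_binetIntegrand_le_of_norm_lt_three_mul (hre : 1 / 4 ≤ z.re) (hz : 4 ≤ ‖z‖)
    (hη : ‖z‖ < 3 * η) :
    ‖binetIntegrand z η‖ ≤ 8 / (1 - exp (-(8 * π / 3))) * exp (-(2 * π) * η) := by
  have hc : 0 < 1 - exp (-(8 * π / 3)) := sub_pos.mpr (exp_lt_one_iff.mpr (by linarith [pi_pos]))
  have hη' : 8 * π / 3 ≤ 2 * π * η := by nlinarith [pi_pos]
  refine (norm_binetIntegrand_le_of_le_two_pi_mul (by positivity) (by linarith) hη').trans ?_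
  gcongr
  rw [div_le_iff₀ (by linarith)]
  linarith

end binetIntegrand

lemma nine_div_eight_mul_pi_sq_le : 9 / (8 * π ^ 2) ≤ 15 / 128 := by
  have hπ : 3.14 < π := pi_gt_d2
  rw [div_le_div_iff₀ (by positivity) (by norm_num)]
  nlinarith

lemma three_le_pi_mul_one_sub_exp : 3 ≤ π * (1 - exp (-(8 * π / 3))) := by
  have h8 : (41 : ℝ) ≤ exp 8 := by
    have := quadratic_le_exp_of_nonneg (x := 8) (by norm_num); norm_num at this; linarith
  have hexp : exp (-(8 * π / 3)) ≤ 1 / 41 :=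
    calc exp (-(8 * π / 3)) ≤ exp (-8) := exp_le_exp.mpr (by linarith [pi_gt_three])
      _ = (exp 8)⁻¹ := exp_neg 8
      _ ≤ 1 / 41 := by rw [one_div]; gcongr
  nlinarith [pi_gt_d2]

open Complex

/-- Let `z = x + iy` with `x ≥ 1/4` and `|z| ≥ 4`, and let
`I(z) = -Re ∫₀^∞ (2η/(η² + z²)) dη/(e^{2πη} - 1)`. Then
`I(z) ≤ 15/(128|z|²) + (4/3) e^{-2π|z|/3}(1 + 1/|z|²)`. -/
theorem binet_integral_bound (x y : ℝ) (z : ℂ) (hz : z = x + y * I)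
    (hx : 1 / 4 ≤ x) (habs : 4 ≤ ‖z‖) :
    -(∫ η : ℝ in Set.Ioi (0 : ℝ),
        (2 * (η : ℂ) / ((η : ℂ) ^ 2 + z ^ 2)) *
          (1 / ((Real.exp (2 * Real.pi * η) : ℂ) - 1))).re ≤
      15 / (128 * (‖z‖) ^ 2) +
        (4 / 3) * Real.exp (-(2 * Real.pi * ‖z‖) / 3) *
          (1 + 1 / (‖z‖) ^ 2) := by
  have hre : 1 / 4 ≤ z.re := by simpa [hz] using hx
  set r := ‖z‖
  set c := 1 - Real.exp (-(8 * π / 3))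
  have hnear : ∀ η ∈ Ioc 0 (r / 3),
      ‖binetIntegrand z η‖ ≤ 9 / (8 * π ^ 2) / r ^ 2 * (π * Real.exp (-π * η)) :=
    fun η hη ↦ norm_binetIntegrand_le_of_three_mul_le hη.1 (by linarith [hη.2])
  have htail : ∀ η ∈ Ioi (r / 3), ‖binetIntegrand z η‖ ≤ 8 / c * Real.exp (-(2 * π) * η) :=
    fun η hη ↦ norm_binetIntegrand_le_of_norm_lt_three_mul hre habs (by linarith [mem_Ioi.mp hη])
  calc -(∫ η in Ioi 0, binetIntegrand z η).re
      ≤ ∫ η in Ioi 0, ‖binetIntegrand z η‖ :=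
        (neg_le_abs _).trans ((abs_re_le_norm _).trans (norm_integral_le_integral_norm _))
    _ ≤ (∫ η in Ioi 0, 9 / (8 * π ^ 2) / r ^ 2 * (π * Real.exp (-π * η))) +
          ∫ η in Ioi (r / 3), 8 / c * Real.exp (-(2 * π) * η) :=
        setIntegral_norm_Ioi_le_add (by positivity)
          (measurable_binetIntegrand z).aestronglyMeasurable
          (((exp_neg_integrableOn_Ioi 0 pi_pos).const_mul _).const_mul _) (fun η _ ↦ by positivity)
          ((exp_neg_integrableOn_Ioi _ (by positivity)).const_mul _) hnear htail
    _ = 9 / (8 * π ^ 2) / r ^ 2 + 4 / (π * c) * Real.exp (-(2 * π * r) / 3) := by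
        rw [integral_const_mul, integral_const_mul, integral_const_mul,
          integral_exp_neg_mul_Ioi pi_pos, integral_exp_neg_mul_Ioi (by positivity), mul_zero,
          Real.exp_zero]
        field_simp
        ring
    _ ≤ 15 / 128 / r ^ 2 + 4 / 3 * Real.exp (-(2 * π * r) / 3) * 1 := by
        rw [mul_one]
        gcongr ?_ / _ + _ / ?_ * _
        exacts [nine_div_eight_mul_pi_sq_le, three_le_pi_mul_one_sub_exp]
    _ ≤ 15 / (128 * r ^ 2) + 4 / 3 * Real.exp (-(2 * π * r) / 3) * (1 + 1 / r ^ 2) := by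
        rw [div_div]
        gcongr
        exact le_add_of_nonneg_right (by positivity)
end

section
/- Let x and y be real numbers with x ≥ 1/4, y ≥ 0, y² > x², and x² + y² < 16. Then -x/(2(x² + y²)) - ∫₀^{√(y² - x²)} ( 2η(η² + x² - y²)/((η² + x² - y²)² + 4x²y²) ) · dη/(e^{2πη} - 1) ≤ 0. -/
open Real MeasureTheory Set

/-!
Write `u = y² - x² - η² ≥ 0`; the negated integrand is `u / (u² + 4x²y²) · 2η / (e^{2πη} - 1)`.
For `x ≥ 1/4` the rational factor is at most `(1 + η²/2) / (x² + y²)`, and `t / (eᵗ - 1) ≤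
(t + 1) e⁻ᵗ` bounds the second factor by `(2η + 1/π) e^{-2πη}`. The product of the two majorants
has integral at most `1/π² + 1/(2π⁴) < 1/8` over `[0, ∞)`, so the integral is at most
`1 / (8(x² + y²)) ≤ x / (2(x² + y²))`.
-/

theorem div_exp_sub_one_le {t : ℝ} (ht : 0 ≤ t) : t / (exp t - 1) ≤ (t + 1) * exp (-t) := by
  rcases ht.eq_or_lt with rfl | ht
  · simp
  have hpos : 0 < exp t - 1 := by linarith [add_one_le_exp t]
  rw [div_le_iff₀ hpos, exp_neg]
  field_simp
  nlinarith [add_one_le_exp t]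

theorem binet_weight_le {η : ℝ} (hη : 0 ≤ η) :
    2 * η * (1 / (exp (2 * π * η) - 1)) ≤ (2 * η + 1 / π) * exp (-(2 * π * η)) := by
  have hπ := pi_pos
  calc 2 * η * (1 / (exp (2 * π * η) - 1)) = 2 * π * η / (exp (2 * π * η) - 1) / π := by
        field_simp
    _ ≤ (2 * π * η + 1) * exp (-(2 * π * η)) / π := by
        gcongr
        exact div_exp_sub_one_le (by positivity)
    _ = (2 * η + 1 / π) * exp (-(2 * π * η)) := by field_simp

theorem binet_kernel_le {x y η : ℝ} (hx : 1 / 4 ≤ x) (hη : η ^ 2 ≤ y ^ 2 - x ^ 2) :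
    (y ^ 2 - x ^ 2 - η ^ 2) / ((η ^ 2 + x ^ 2 - y ^ 2) ^ 2 + 4 * x ^ 2 * y ^ 2) ≤
      (1 + η ^ 2 / 2) / (x ^ 2 + y ^ 2) := by
  have hx0 : 0 < x := by linarith
  have hy : 0 < y ^ 2 := by nlinarith
  rw [div_le_div_iff₀ (by positivity) (by positivity)]
  have hu : 0 ≤ y ^ 2 - x ^ 2 - η ^ 2 := by linarith
  have hv := sq_nonneg η
  have hp : 0 ≤ x ^ 2 - 1 / 16 := by nlinarith
  -- With `u = y² - x² - η²`, `v = η²`, `p = x²`, the right side minus the left side is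
  -- `2pu + 4pv + 4p² + vu²/2 + 2puv + 2pv² + 2p²v - uv`, and `p ≥ 1/16` pays for `-uv`.
  nlinarith [mul_nonneg hv (sq_nonneg (y ^ 2 - x ^ 2 - η ^ 2 - 3 / 4)),
    mul_nonneg hu (sq_nonneg (η ^ 2 - 1 / 2)), sq_nonneg (η ^ 2 - 1 / 2),
    mul_nonneg hp hu, mul_nonneg hp hv, mul_nonneg (mul_nonneg hp hu) hv, mul_nonneg hu hv]

theorem integral_binet_majorant_le {s : ℝ} (hs : 0 ≤ s) :
    ∫ η in (0 : ℝ)..s, (1 + η ^ 2 / 2) * ((2 * η + 1 / π) * exp (-(2 * π * η))) ≤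
      1 / π ^ 2 + 1 / (2 * π ^ 4) := by
  have hπ := pi_pos
  -- `2πQ - Q'` is the cubic `(1 + η²/2)(2η + 1/π)`, so `-Q η * exp (-2πη)` is an antiderivative
  let Q : ℝ → ℝ := fun η =>
    η ^ 3 / (2 * π) + η ^ 2 / π ^ 2 + (1 / π + 1 / π ^ 3) * η + (1 / π ^ 2 + 1 / (2 * π ^ 4))
  have hQ (η : ℝ) :
      HasDerivAt Q (3 * η ^ 2 / (2 * π) + 2 * η / π ^ 2 + (1 / π + 1 / π ^ 3)) η := by
    refine (((((hasDerivAt_pow 3 η).div_const (2 * π)).add ((hasDerivAt_pow 2 η).div_const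
      (π ^ 2))).add ((hasDerivAt_id η).const_mul (1 / π + 1 / π ^ 3))).add_const
      (1 / π ^ 2 + 1 / (2 * π ^ 4))).congr_deriv ?_
    norm_num
  have hexp (η : ℝ) :
      HasDerivAt (fun t => exp (-(2 * π * t))) (-(2 * π) * exp (-(2 * π * η))) η := by
    simpa [mul_comm] using ((hasDerivAt_id η).const_mul (-(2 * π))).exp
  have hderiv (η : ℝ) : HasDerivAt (fun t => -(Q t * exp (-(2 * π * t))))
      ((1 + η ^ 2 / 2) * ((2 * η + 1 / π) * exp (-(2 * π * η)))) η := by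
    refine ((hQ η).mul (hexp η)).neg.congr_deriv ?_
    simp only [Q]
    field_simp
    ring
  rw [intervalIntegral.integral_eq_sub_of_hasDerivAt (fun η _ => hderiv η)
    ((by fun_prop : Continuous _).intervalIntegrable _ _)]
  have hQs : 0 ≤ Q s * exp (-(2 * π * s)) := by positivity
  simp only [Q, mul_zero, neg_zero, exp_zero, mul_one] at hQs ⊢
  ring_nf at hQs ⊢
  linarith

theorem binet_integrand_mem_Icc {x y η : ℝ} (hx : 1 / 4 ≤ x) (hη₀ : 0 ≤ η)
    (hη : η ^ 2 ≤ y ^ 2 - x ^ 2) :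
    -((2 * η * (η ^ 2 + x ^ 2 - y ^ 2) / ((η ^ 2 + x ^ 2 - y ^ 2) ^ 2 + 4 * x ^ 2 * y ^ 2)) *
        (1 / (exp (2 * π * η) - 1))) ∈
      Icc 0 ((1 + η ^ 2 / 2) * ((2 * η + 1 / π) * exp (-(2 * π * η))) / (x ^ 2 + y ^ 2)) := by
  have hx0 : 0 < x := by linarith
  have hy : 0 < y ^ 2 := by nlinarith
  have hD : 0 < (η ^ 2 + x ^ 2 - y ^ 2) ^ 2 + 4 * x ^ 2 * y ^ 2 := by positivity
  have hkernel : 0 ≤ (y ^ 2 - x ^ 2 - η ^ 2) / ((η ^ 2 + x ^ 2 - y ^ 2) ^ 2 + 4 * x ^ 2 * y ^ 2) :=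
    div_nonneg (by linarith) hD.le
  have hweight : 0 ≤ 2 * η * (1 / (exp (2 * π * η) - 1)) := by
    have : 1 ≤ exp (2 * π * η) := one_le_exp (by positivity)
    positivity
  have hsplit : -((2 * η * (η ^ 2 + x ^ 2 - y ^ 2) /
      ((η ^ 2 + x ^ 2 - y ^ 2) ^ 2 + 4 * x ^ 2 * y ^ 2)) * (1 / (exp (2 * π * η) - 1))) =
      (y ^ 2 - x ^ 2 - η ^ 2) / ((η ^ 2 + x ^ 2 - y ^ 2) ^ 2 + 4 * x ^ 2 * y ^ 2) *
        (2 * η * (1 / (exp (2 * π * η) - 1))) := by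
    ring
  rw [hsplit]
  refine ⟨mul_nonneg hkernel hweight, ?_⟩
  calc _ ≤ (1 + η ^ 2 / 2) / (x ^ 2 + y ^ 2) * ((2 * η + 1 / π) * exp (-(2 * π * η))) :=
        mul_le_mul (binet_kernel_le hx hη) (binet_weight_le hη₀) hweight (by positivity)
    _ = _ := by ring

theorem neg_integral_binet_integrand_le {x y : ℝ} (hx : 1 / 4 ≤ x) :
    -∫ η in (0 : ℝ)..√(y ^ 2 - x ^ 2),
        (2 * η * (η ^ 2 + x ^ 2 - y ^ 2) / ((η ^ 2 + x ^ 2 - y ^ 2) ^ 2 + 4 * x ^ 2 * y ^ 2)) *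
          (1 / (exp (2 * π * η) - 1)) ≤ 1 / (8 * (x ^ 2 + y ^ 2)) := by
  have hs : 0 ≤ √(y ^ 2 - x ^ 2) := sqrt_nonneg _
  have hmem (η : ℝ) (hη : η ∈ Ioc 0 √(y ^ 2 - x ^ 2)) :=
    binet_integrand_mem_Icc hx hη.1.le ((le_sqrt' hη.1).1 hη.2)
  have hπ : 9 ≤ π ^ 2 := by nlinarith [pi_gt_three]
  have hmajorant : 1 / π ^ 2 + 1 / (2 * π ^ 4) ≤ 1 / 8 := by
    have : 1 / π ^ 2 ≤ 1 / 9 := one_div_le_one_div_of_le (by norm_num) hπ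
    have : 1 / (2 * π ^ 4) ≤ 1 / 162 := one_div_le_one_div_of_le (by norm_num) (by nlinarith)
    linarith
  calc _ ≤ (∫ η in (0 : ℝ)..√(y ^ 2 - x ^ 2),
          (1 + η ^ 2 / 2) * ((2 * η + 1 / π) * exp (-(2 * π * η)))) / (x ^ 2 + y ^ 2) := by
        rw [← intervalIntegral.integral_neg, ← intervalIntegral.integral_div,
          intervalIntegral.integral_of_le hs, intervalIntegral.integral_of_le hs]
        refine integral_mono_of_nonneg (ae_restrict_of_forall_mem measurableSet_Ioc
          fun η hη => (hmem η hη).1) ?_ (ae_restrict_of_forall_mem measurableSet_Ioc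
          fun η hη => (hmem η hη).2)
        exact (by fun_prop : Continuous _).integrableOn_Ioc
    _ ≤ (1 / 8) / (x ^ 2 + y ^ 2) := by
        gcongr
        exact (integral_binet_majorant_le hs).trans hmajorant
    _ = 1 / (8 * (x ^ 2 + y ^ 2)) := by rw [div_div]

theorem binet_small_z_inequality_general (x y : ℝ) (hx : 1 / 4 ≤ x) :
    -x / (2 * (x ^ 2 + y ^ 2)) -
      ∫ η in (0 : ℝ)..Real.sqrt (y ^ 2 - x ^ 2),
        (2 * η * (η ^ 2 + x ^ 2 - y ^ 2) /
          ((η ^ 2 + x ^ 2 - y ^ 2) ^ 2 + 4 * x ^ 2 * y ^ 2)) *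
          (1 / (Real.exp (2 * Real.pi * η) - 1)) ≤ 0 := by
  have hx0 : 0 < x := by linarith
  have hbound := neg_integral_binet_integrand_le (y := y) hx
  calc _ ≤ -x / (2 * (x ^ 2 + y ^ 2)) + 1 / (8 * (x ^ 2 + y ^ 2)) := by linarith
    _ = (1 - 4 * x) / (8 * (x ^ 2 + y ^ 2)) := by field_simp; ring
    _ ≤ 0 := div_nonpos_of_nonpos_of_nonneg (by linarith) (by positivity)

/-- Let `x, y` be real with `x ≥ 1/4`, `y ≥ 0`, `y² > x²`, and
`x² + y² < 16`. Then
`-x/(2(x²+y²)) - ∫₀^{√(y²-x²)} (2η(η²+x²-y²)/((η²+x²-y²)² + 4x²y²))·dη/(e^{2πη}-1) ≤ 0`. -/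
theorem binet_small_z_inequality (x y : ℝ) (hx : 1 / 4 ≤ x) (hy : 0 ≤ y)
    (h1 : x ^ 2 < y ^ 2) (h2 : x ^ 2 + y ^ 2 < 16) :
    -x / (2 * (x ^ 2 + y ^ 2)) -
      ∫ η in (0 : ℝ)..Real.sqrt (y ^ 2 - x ^ 2),
        (2 * η * (η ^ 2 + x ^ 2 - y ^ 2) /
          ((η ^ 2 + x ^ 2 - y ^ 2) ^ 2 + 4 * x ^ 2 * y ^ 2)) *
          (1 / (Real.exp (2 * Real.pi * η) - 1)) ≤ 0 :=
  binet_small_z_inequality_general x y hx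
end
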